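/- arXiv:2311.09408 — 3 statements merged into one kernel-verified Lean document; each statement's English description precedes it below -/
import Mathlib

section
/- The map u ↦ ∇Φ¹(u) + H_diag ∇Φ²(Hu + d) is (m − c)-strongly monotone whenever m > c; that is, if m > c then for all u₁, u₂ ∈ ℝ^N, ⟨F(u₁) − F(u₂), u₁ − u₂⟩ ≥ (m − c)‖u₁ − u₂‖², where m = m_u + σ_min(H)² m_y and c = σ_max(H − H_diag) σ_max(H) L_y. -/
open RealInnerProductSpace

/-- Largest singular value of a square matrix: the operator 2-norm of `v ↦ M v`
on Euclidean space. -/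
noncomputable def sigmaMax {N : ℕ} (M : Matrix (Fin N) (Fin N) ℝ) : ℝ :=
  ‖Matrix.toEuclideanCLM (𝕜 := ℝ) M‖

/-- Smallest singular value of a square matrix: the infimum of `‖M v‖` over the
unit sphere of Euclidean space. -/
noncomputable def sigmaMin {N : ℕ} (M : Matrix (Fin N) (Fin N) ℝ) : ℝ :=
  sInf ((fun v : EuclideanSpace ℝ (Fin N) => ‖Matrix.toEuclideanCLM (𝕜 := ℝ) M v‖) '' {v | ‖v‖ = 1})

/-- Matrix-vector multiplication as a map on Euclidean space. -/
noncomputable def mulV {N : ℕ} (M : Matrix (Fin N) (Fin N) ℝ) (v : EuclideanSpace ℝ (Fin N)) :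
    EuclideanSpace ℝ (Fin N) :=
  Matrix.toEuclideanCLM (𝕜 := ℝ) M v


lemma sigmaMin_nonneg {N : ℕ} (hN : 0 < N) (M : Matrix (Fin N) (Fin N) ℝ) :
    0 ≤ sigmaMin M := by
  haveI : Nontrivial (EuclideanSpace ℝ (Fin N)) := by
    haveI : Nonempty (Fin N) := ⟨⟨0, hN⟩⟩
    infer_instance
  obtain ⟨v, hv⟩ := exists_norm_eq (EuclideanSpace ℝ (Fin N)) (zero_le_one)
  refine le_csInf ⟨‖Matrix.toEuclideanCLM (𝕜 := ℝ) M v‖, ⟨v, hv, rfl⟩⟩ ?_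
  rintro b ⟨w, -, rfl⟩; exact norm_nonneg _

lemma sigmaMin_mul_le {N : ℕ} (hN : 0 < N) (M : Matrix (Fin N) (Fin N) ℝ)
    (v : EuclideanSpace ℝ (Fin N)) : sigmaMin M * ‖v‖ ≤ ‖mulV M v‖ := by
  rcases eq_or_ne v 0 with rfl | hv
  · simp [mulV]
  · have hv' : ‖v‖ ≠ 0 := norm_ne_zero_iff.mpr hv
    have h1 : sigmaMin M ≤ ‖Matrix.toEuclideanCLM (𝕜 := ℝ) M (‖v‖⁻¹ • v)‖ := by
      apply csInf_le
      · exact ⟨0, by rintro b ⟨w, -, rfl⟩; exact norm_nonneg _⟩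
      · exact ⟨‖v‖⁻¹ • v, by simp [norm_smul, abs_of_nonneg, inv_mul_cancel₀ hv'], rfl⟩
    have h2 : ‖Matrix.toEuclideanCLM (𝕜 := ℝ) M (‖v‖⁻¹ • v)‖ = ‖v‖⁻¹ * ‖mulV M v‖ := by
      rw [map_smul, norm_smul, norm_inv, norm_norm]; rfl
    rw [h2] at h1
    have := mul_le_mul_of_nonneg_right h1 (norm_nonneg v)
    calc sigmaMin M * ‖v‖ ≤ ‖v‖⁻¹ * ‖mulV M v‖ * ‖v‖ := this
    _ = ‖mulV M v‖ := by field_simp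

lemma mulV_le {N : ℕ} (M : Matrix (Fin N) (Fin N) ℝ) (v : EuclideanSpace ℝ (Fin N)) :
    ‖mulV M v‖ ≤ sigmaMax M * ‖v‖ :=
  (Matrix.toEuclideanCLM (𝕜 := ℝ) M).le_opNorm v

/-- Lemma 1.
The decentralized pseudo-gradient map `F(u) = ∇Φ¹(u) + H_diag ∇Φ²(H u + d)` is
`(m - c)`-strongly monotone whenever `m > c`, where `m = m_u + σ_min(H)² m_y` and
`c = σ_max(H − H_diag) σ_max(H) L_y`. -/
theorem stmt1 {N : ℕ} (hN : 0 < N)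
    (H : Matrix (Fin N) (Fin N) ℝ) (d : EuclideanSpace ℝ (Fin N))
    (Φ1 Φ2 : EuclideanSpace ℝ (Fin N) → ℝ)
    (mu Lu my Ly : ℝ)
    (hmu : 0 < mu) (hmuLu : mu ≤ Lu) (hmy : 0 < my) (hmyLy : my ≤ Ly)
    (hΦ1diff : Differentiable ℝ Φ1) (hΦ2diff : Differentiable ℝ Φ2)
    (hΦ1mono : ∀ a b, mu * ‖a - b‖ ^ 2 ≤ ⟪gradient Φ1 a - gradient Φ1 b, a - b⟫)
    (hΦ1lip : ∀ a b, ‖gradient Φ1 a - gradient Φ1 b‖ ≤ Lu * ‖a - b‖)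
    (hΦ2mono : ∀ a b, my * ‖a - b‖ ^ 2 ≤ ⟪gradient Φ2 a - gradient Φ2 b, a - b⟫)
    (hΦ2lip : ∀ a b, ‖gradient Φ2 a - gradient Φ2 b‖ ≤ Ly * ‖a - b‖)
    (Hdiag : Matrix (Fin N) (Fin N) ℝ)
    (hHdiag : Hdiag = Matrix.diagonal (fun i => H i i))
    (F : EuclideanSpace ℝ (Fin N) → EuclideanSpace ℝ (Fin N))
    (hF : ∀ u, F u = gradient Φ1 u + mulV Hdiag (gradient Φ2 (mulV H u + d)))
    (m c : ℝ)
    (hm : m = mu + sigmaMin H ^ 2 * my)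
    (hc : c = sigmaMax (H - Hdiag) * sigmaMax H * Ly)
    (hmc : m > c) :
    ∀ u1 u2 : EuclideanSpace ℝ (Fin N),
      (m - c) * ‖u1 - u2‖ ^ 2 ≤ ⟪F u1 - F u2, u1 - u2⟫ := by
  intro u1 u2
  set u : EuclideanSpace ℝ (Fin N) := u1 - u2 with hu
  set g : EuclideanSpace ℝ (Fin N) :=
    gradient Φ2 (mulV H u1 + d) - gradient Φ2 (mulV H u2 + d) with hg
  -- Hdiag is self-adjoint
  have hstar : star Hdiag = Hdiag := by
    rw [hHdiag, Matrix.star_eq_conjTranspose, Matrix.diagonal_conjTranspose]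
    simp
  have hadj : ∀ x y : EuclideanSpace ℝ (Fin N), ⟪mulV Hdiag x, y⟫ = ⟪x, mulV Hdiag y⟫ := by
    intro x y
    have : Matrix.toEuclideanCLM (𝕜 := ℝ) Hdiag =
        ContinuousLinearMap.adjoint (Matrix.toEuclideanCLM (𝕜 := ℝ) Hdiag) := by
      rw [← ContinuousLinearMap.star_eq_adjoint, ← map_star, hstar]
    show ⟪Matrix.toEuclideanCLM (𝕜 := ℝ) Hdiag x, y⟫ = _
    rw [this, ContinuousLinearMap.adjoint_inner_left]; rfl
  -- split: F u1 - F u2 = (∇Φ1 diff) + Hdiag g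
  have hsplit : F u1 - F u2 = (gradient Φ1 u1 - gradient Φ1 u2) + mulV Hdiag g := by
    rw [hF, hF, hg]
    simp only [mulV, map_sub]
    abel
  have hmulsub : ∀ (M : Matrix (Fin N) (Fin N) ℝ) x y, mulV M x - mulV M y = mulV M (x - y) := by
    intro M x y; simp [mulV, map_sub]
  -- key inner products
  have hHu : mulV H u1 - mulV H u2 = mulV H u := hmulsub H u1 u2
  have hgnorm : ‖g‖ ≤ Ly * ‖mulV H u‖ := by
    have := hΦ2lip (mulV H u1 + d) (mulV H u2 + d)
    simpa [hg, add_sub_add_right_eq_sub, hHu] using this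
  have hmono2 : my * ‖mulV H u‖ ^ 2 ≤ ⟪g, mulV H u⟫ := by
    have := hΦ2mono (mulV H u1 + d) (mulV H u2 + d)
    simpa [hg, add_sub_add_right_eq_sub, hHu] using this
  -- ⟪Hdiag g, u⟫ = ⟪g, H u⟫ - ⟪g, (H - Hdiag) u⟫
  have hdecomp : ⟪mulV Hdiag g, u⟫ = ⟪g, mulV H u⟫ - ⟪g, mulV (H - Hdiag) u⟫ := by
    rw [hadj, ← inner_sub_right]
    congr 1
    simp [mulV, map_sub]
  have hAu : ‖mulV H u‖ ≤ sigmaMax H * ‖u‖ := mulV_le H u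
  have hBu : ‖mulV (H - Hdiag) u‖ ≤ sigmaMax (H - Hdiag) * ‖u‖ := mulV_le _ u
  have hcross : ⟪g, mulV (H - Hdiag) u⟫ ≤ c * ‖u‖ ^ 2 := by
    have h1 : ⟪g, mulV (H - Hdiag) u⟫ ≤ ‖g‖ * ‖mulV (H - Hdiag) u‖ := real_inner_le_norm _ _
    have h2 : ‖g‖ * ‖mulV (H - Hdiag) u‖ ≤ (Ly * (sigmaMax H * ‖u‖)) * (sigmaMax (H - Hdiag) * ‖u‖) := by
      have hLy : (0:ℝ) ≤ Ly := le_of_lt (hmy.trans_le hmyLy)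
      have hb : (0:ℝ) ≤ Ly * (sigmaMax H * ‖u‖) := by
        have : (0:ℝ) ≤ sigmaMax H := norm_nonneg _
        positivity
      exact mul_le_mul (hgnorm.trans (mul_le_mul_of_nonneg_left hAu hLy)) hBu (norm_nonneg _) hb
    rw [hc]; nlinarith [h1, h2]
  have hmin : sigmaMin H * ‖u‖ ≤ ‖mulV H u‖ := sigmaMin_mul_le hN H u
  have hminnn : 0 ≤ sigmaMin H := sigmaMin_nonneg hN H
  have hsq : sigmaMin H ^ 2 * ‖u‖ ^ 2 ≤ ‖mulV H u‖ ^ 2 := by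
    have h := mul_le_mul hmin hmin (by positivity) (norm_nonneg _)
    nlinarith [h]
  have h1 : mu * ‖u‖ ^ 2 ≤ ⟪gradient Φ1 u1 - gradient Φ1 u2, u⟫ := hΦ1mono u1 u2
  have hfinal : ⟪F u1 - F u2, u⟫ =
      ⟪gradient Φ1 u1 - gradient Φ1 u2, u⟫ + (⟪g, mulV H u⟫ - ⟪g, mulV (H - Hdiag) u⟫) := by
    rw [hsplit, inner_add_left, hdecomp]
  rw [hfinal, hm]
  have h2 : my * (sigmaMin H ^ 2 * ‖u‖ ^ 2) ≤ my * ‖mulV H u‖ ^ 2 :=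
    mul_le_mul_of_nonneg_left hsq hmy.le
  linarith [h1, hmono2, h2, hcross]
end

section
/- Let u* be the unique minimizer of Φ̃ and y* = Hu* + d. Then for every η > 0 and every u ∈ ℝ^N, the decentralized update u⁺ = u − η F(u) satisfies the one-step bound ‖u⁺ − u*‖ ≤ (√(1 − 2mη + L²η²) + cη) ‖u − u*‖ + η ‖(Hᵀ − H_diag) ∇Φ²(y*)‖, where m = m_u + σ_min(H)² m_y, c = σ_max(H − H_diag) σ_max(H) L_y, L = L_u + σ_max(H)² L_y (note 1 − 2mη + L²η² ≥ 0 since m ≤ L). -/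
/-! The gradient `∇Φ̃ = ∇Φ¹ + Hᵀ ∇Φ²(H · + d)` is `m`-strongly monotone and `L`-Lipschitz and
vanishes at the minimizer `u*`, so a step `u - η ∇Φ̃(u)` moves `u - u*` by a factor at most
`√(1 - 2mη + L²η²)`. The decentralized direction `F` differs from `∇Φ̃` by
`(Hᵀ - H_diag) ∇Φ²(Hu + d)`; splitting `∇Φ²(Hu + d)` at `y*` bounds this error by
`c ‖u - u*‖ + ‖(Hᵀ - H_diag) ∇Φ²(y*)‖`. -/

open RealInnerProductSpace

open InnerProductSpace ContinuousLinearMap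

section InnerProductSpace

variable {E : Type*} [NormedAddCommGroup E] [InnerProductSpace ℝ E]

lemma one_sub_two_mul_add_sq_mul_sq_nonneg {m L η : ℝ} (hmL : m ≤ L) (hη : 0 ≤ η) :
    0 ≤ 1 - 2 * m * η + L ^ 2 * η ^ 2 := by
  nlinarith [sq_nonneg (1 - L * η), mul_nonneg (sub_nonneg.mpr hmL) hη]

lemma norm_sub_smul_le_sqrt_mul_norm {m L η : ℝ} (hη : 0 ≤ η) {a g : E}
    (hmono : m * ‖a‖ ^ 2 ≤ ⟪g, a⟫) (hlip : ‖g‖ ≤ L * ‖a‖) :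
    ‖a - η • g‖ ≤ Real.sqrt (1 - 2 * m * η + L ^ 2 * η ^ 2) * ‖a‖ := by
  have hsq : ‖a - η • g‖ ^ 2 ≤ (1 - 2 * m * η + L ^ 2 * η ^ 2) * ‖a‖ ^ 2 := by
    have hg2 : ‖g‖ ^ 2 ≤ (L * ‖a‖) ^ 2 := pow_le_pow_left₀ (norm_nonneg g) hlip 2
    rw [norm_sub_sq_real, real_inner_smul_right, real_inner_comm, norm_smul, Real.norm_eq_abs,
      mul_pow, sq_abs]
    nlinarith [mul_le_mul_of_nonneg_left hmono hη, mul_le_mul_of_nonneg_left hg2 (sq_nonneg η)]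
  calc ‖a - η • g‖ = Real.sqrt (‖a - η • g‖ ^ 2) := (Real.sqrt_sq (norm_nonneg _)).symm
    _ ≤ Real.sqrt ((1 - 2 * m * η + L ^ 2 * η ^ 2) * ‖a‖ ^ 2) := Real.sqrt_le_sqrt hsq
    _ = Real.sqrt (1 - 2 * m * η + L ^ 2 * η ^ 2) * ‖a‖ := by
        rw [Real.sqrt_mul' _ (sq_nonneg _), Real.sqrt_sq (norm_nonneg _)]

lemma norm_sub_smul_sub_le {G F : E → E} {m L η : ℝ} {x : E}
    (hmono : ∀ a b, m * ‖a - b‖ ^ 2 ≤ ⟪G a - G b, a - b⟫)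
    (hlip : ∀ a b, ‖G a - G b‖ ≤ L * ‖a - b‖) (hx : G x = 0) (hη : 0 ≤ η) (u : E) :
    ‖(u - η • F u) - x‖ ≤
      Real.sqrt (1 - 2 * m * η + L ^ 2 * η ^ 2) * ‖u - x‖ + η * ‖F u - G u‖ := by
  have hsplit : (u - η • F u) - x = ((u - x) - η • (G u - G x)) - η • (F u - G u) := by
    rw [hx]; module
  rw [hsplit]
  refine (norm_sub_le _ _).trans (add_le_add (norm_sub_smul_le_sqrt_mul_norm hη ?_ ?_) ?_)
  · exact hmono u x
  · exact hlip u x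
  · rw [norm_smul, Real.norm_of_nonneg hη]

lemma norm_apply_comp_affine_le {g : E → E} {Lg : ℝ} (hg : ∀ a b, ‖g a - g b‖ ≤ Lg * ‖a - b‖)
    (hLg : 0 ≤ Lg) (A B : E →L[ℝ] E) (d u v : E) :
    ‖B (g (A u + d))‖ ≤ ‖B‖ * ‖A‖ * Lg * ‖u - v‖ + ‖B (g (A v + d))‖ :=
  calc ‖B (g (A u + d))‖ ≤ ‖B (g (A u + d) - g (A v + d))‖ + ‖B (g (A v + d))‖ := by
        rw [map_sub]; exact norm_le_norm_sub_add _ _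
    _ ≤ ‖B‖ * (Lg * ‖A (u - v)‖) + ‖B (g (A v + d))‖ := by
        gcongr
        refine B.le_opNorm_of_le ?_
        simpa only [add_sub_add_right_eq_sub, map_sub] using hg (A u + d) (A v + d)
    _ ≤ ‖B‖ * (Lg * (‖A‖ * ‖u - v‖)) + ‖B (g (A v + d))‖ := by gcongr; exact A.le_opNorm _
    _ = ‖B‖ * ‖A‖ * Lg * ‖u - v‖ + ‖B (g (A v + d))‖ := by ring

variable [CompleteSpace E]

lemma IsLocalMin.hasGradientAt_eq_zero {f : E → ℝ} {a g : E} (hmin : IsLocalMin f a)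
    (hg : HasGradientAt f g a) : g = 0 :=
  (toDual ℝ E).map_eq_zero_iff.mp (hmin.hasFDerivAt_eq_zero hg.hasFDerivAt)

noncomputable def addAdjointComp (f g : E → E) (A : E →L[ℝ] E) (d : E) (u : E) : E :=
  f u + adjoint A (g (A u + d))

lemma hasGradientAt_add_comp_affine {f g : E → ℝ} (A : E →L[ℝ] E) (d : E) {u : E}
    (hf : DifferentiableAt ℝ f u) (hg : DifferentiableAt ℝ g (A u + d)) :
    HasGradientAt (fun u => f u + g (A u + d))
      (addAdjointComp (gradient f) (gradient g) A d u) u := by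
  set w := gradient g (A u + d)
  have hcomp : HasFDerivAt (fun u => g (A u + d)) ((toDual ℝ E w).comp A) u :=
    hg.hasGradientAt.hasFDerivAt.comp u (A.hasFDerivAt.add_const d)
  have hdual : (toDual ℝ E w).comp A = toDual ℝ E (adjoint A w) := by
    ext v
    simp only [comp_apply, toDual_apply_apply, adjoint_inner_left]
  rw [hasGradientAt_iff_hasFDerivAt, addAdjointComp, map_add, ← hdual]
  exact hf.hasGradientAt.hasFDerivAt.add hcomp

lemma addAdjointComp_strongMono {f g : E → E} {A : E →L[ℝ] E} {d : E} {μf μg s : ℝ}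
    (hf : ∀ a b, μf * ‖a - b‖ ^ 2 ≤ ⟪f a - f b, a - b⟫)
    (hg : ∀ a b, μg * ‖a - b‖ ^ 2 ≤ ⟪g a - g b, a - b⟫)
    (hμg : 0 ≤ μg) (hs : 0 ≤ s) (hA : ∀ v, s * ‖v‖ ≤ ‖A v‖) (a b : E) :
    (μf + s ^ 2 * μg) * ‖a - b‖ ^ 2 ≤
      ⟪addAdjointComp f g A d a - addAdjointComp f g A d b, a - b⟫ := by
  have hsplit : ⟪addAdjointComp f g A d a - addAdjointComp f g A d b, a - b⟫ =
      ⟪f a - f b, a - b⟫ + ⟪g (A a + d) - g (A b + d), (A a + d) - (A b + d)⟫ := by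
    rw [addAdjointComp, addAdjointComp, add_sub_add_comm, ← map_sub, inner_add_left,
      adjoint_inner_left, add_sub_add_right_eq_sub, map_sub]
  have hAab : (s * ‖a - b‖) ^ 2 ≤ ‖A a + d - (A b + d)‖ ^ 2 := by
    rw [add_sub_add_right_eq_sub, ← map_sub]
    exact pow_le_pow_left₀ (by positivity) (hA _) 2
  have := hg (A a + d) (A b + d)
  rw [hsplit]
  nlinarith [hf a b]

lemma addAdjointComp_lipschitz {f g : E → E} {A : E →L[ℝ] E} {d : E} {Lf Lg : ℝ}
    (hf : ∀ a b, ‖f a - f b‖ ≤ Lf * ‖a - b‖) (hg : ∀ a b, ‖g a - g b‖ ≤ Lg * ‖a - b‖)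
    (hLg : 0 ≤ Lg) (a b : E) :
    ‖addAdjointComp f g A d a - addAdjointComp f g A d b‖ ≤ (Lf + ‖A‖ ^ 2 * Lg) * ‖a - b‖ := by
  have hAg : ‖adjoint A (g (A a + d) - g (A b + d))‖ ≤ ‖A‖ ^ 2 * Lg * ‖a - b‖ :=
    calc ‖adjoint A (g (A a + d) - g (A b + d))‖
        ≤ ‖A‖ * ‖g (A a + d) - g (A b + d)‖ := by
          simpa only [LinearIsometryEquiv.norm_map] using (adjoint A).le_opNorm _
      _ ≤ ‖A‖ * (Lg * ‖A (a - b)‖) := by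
          gcongr
          simpa only [add_sub_add_right_eq_sub, map_sub] using hg (A a + d) (A b + d)
      _ ≤ ‖A‖ * (Lg * (‖A‖ * ‖a - b‖)) := by gcongr; exact A.le_opNorm _
      _ = ‖A‖ ^ 2 * Lg * ‖a - b‖ := by ring
  calc ‖addAdjointComp f g A d a - addAdjointComp f g A d b‖
      = ‖(f a - f b) + adjoint A (g (A a + d) - g (A b + d))‖ := by
        rw [addAdjointComp, addAdjointComp, add_sub_add_comm, map_sub]
    _ ≤ Lf * ‖a - b‖ + ‖A‖ ^ 2 * Lg * ‖a - b‖ := norm_add_le_of_le (hf a b) hAg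
    _ = (Lf + ‖A‖ ^ 2 * Lg) * ‖a - b‖ := by ring

end InnerProductSpace

namespace Matrix

variable {N : ℕ}

lemma adjoint_toEuclideanCLM (H : Matrix (Fin N) (Fin N) ℝ) :
    adjoint (toEuclideanCLM (𝕜 := ℝ) H) = toEuclideanCLM (𝕜 := ℝ) H.transpose := by
  rw [← conjTranspose_eq_transpose_of_trivial, ← star_eq_adjoint, ← map_star, star_eq_conjTranspose]

lemma sigmaMax_transpose (H : Matrix (Fin N) (Fin N) ℝ) : sigmaMax H.transpose = sigmaMax H := by
  rw [sigmaMax, sigmaMax, ← adjoint_toEuclideanCLM, LinearIsometryEquiv.norm_map]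

lemma sigmaMax_transpose_sub (H : Matrix (Fin N) (Fin N) ℝ) {D : Matrix (Fin N) (Fin N) ℝ}
    (hD : Dᵀ = D) : sigmaMax (Hᵀ - D) = sigmaMax (H - D) := by
  rw [← sigmaMax_transpose (H - D), transpose_sub, hD]

lemma sigmaMin_nonneg (H : Matrix (Fin N) (Fin N) ℝ) : 0 ≤ sigmaMin H :=
  Real.sInf_nonneg (by rintro _ ⟨v, -, rfl⟩; positivity)

lemma sigmaMin_le_norm_toEuclideanCLM_apply (H : Matrix (Fin N) (Fin N) ℝ)
    {v : EuclideanSpace ℝ (Fin N)} (hv : ‖v‖ = 1) : sigmaMin H ≤ ‖toEuclideanCLM (𝕜 := ℝ) H v‖ :=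
  csInf_le ⟨0, by rintro _ ⟨w, -, rfl⟩; positivity⟩ ⟨v, hv, rfl⟩

lemma sigmaMin_mul_norm_le (H : Matrix (Fin N) (Fin N) ℝ) (v : EuclideanSpace ℝ (Fin N)) :
    sigmaMin H * ‖v‖ ≤ ‖toEuclideanCLM (𝕜 := ℝ) H v‖ := by
  rcases eq_or_ne v 0 with rfl | hv
  · simp
  have hv' : 0 < ‖v‖ := norm_pos_iff.mpr hv
  have hunit := sigmaMin_le_norm_toEuclideanCLM_apply H (norm_smul_inv_norm (𝕜 := ℝ) hv)
  rw [map_smul, norm_smul, Real.norm_of_nonneg (by positivity)] at hunit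
  rwa [← le_div_iff₀ hv', div_eq_inv_mul]

lemma sigmaMin_le_sigmaMax (H : Matrix (Fin N) (Fin N) ℝ) : sigmaMin H ≤ sigmaMax H := by
  by_cases h : ∃ v : EuclideanSpace ℝ (Fin N), ‖v‖ = 1
  · obtain ⟨v, hv⟩ := h
    calc sigmaMin H ≤ ‖toEuclideanCLM (𝕜 := ℝ) H v‖ := sigmaMin_le_norm_toEuclideanCLM_apply H hv
      _ ≤ sigmaMax H := (toEuclideanCLM (𝕜 := ℝ) H).unit_le_opNorm v hv.le
  -- only for `N = 0`, where `sigmaMin H = sInf ∅ = 0`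
  · have hempty : {v : EuclideanSpace ℝ (Fin N) | ‖v‖ = 1} = ∅ :=
      Set.eq_empty_iff_forall_notMem.mpr fun v hv => h ⟨v, hv⟩
    rw [sigmaMin, hempty, Set.image_empty, Real.sInf_empty]
    exact norm_nonneg _

end Matrix

theorem stmt5_general {N : ℕ}
(H : Matrix (Fin N) (Fin N) ℝ) (d : EuclideanSpace ℝ (Fin N))
    (Φ1 Φ2 : EuclideanSpace ℝ (Fin N) → ℝ)
    (mu Lu my Ly : ℝ)
    (hmuLu : mu ≤ Lu) (hmy : 0 < my) (hmyLy : my ≤ Ly)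
    (hΦ1diff : Differentiable ℝ Φ1) (hΦ2diff : Differentiable ℝ Φ2)
    (hΦ1mono : ∀ a b, mu * ‖a - b‖ ^ 2 ≤ ⟪gradient Φ1 a - gradient Φ1 b, a - b⟫)
    (hΦ1lip : ∀ a b, ‖gradient Φ1 a - gradient Φ1 b‖ ≤ Lu * ‖a - b‖)
    (hΦ2mono : ∀ a b, my * ‖a - b‖ ^ 2 ≤ ⟪gradient Φ2 a - gradient Φ2 b, a - b⟫)
    (hΦ2lip : ∀ a b, ‖gradient Φ2 a - gradient Φ2 b‖ ≤ Ly * ‖a - b‖)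
    (Hdiag : Matrix (Fin N) (Fin N) ℝ)
    (hHdiag : Hdiag = Matrix.diagonal (fun i => H i i))
    (F : EuclideanSpace ℝ (Fin N) → EuclideanSpace ℝ (Fin N))
    (hF : ∀ u, F u = gradient Φ1 u + mulV Hdiag (gradient Φ2 (mulV H u + d)))
    (m c L : ℝ)
    (hm : m = mu + sigmaMin H ^ 2 * my)
    (hc : c = sigmaMax (H - Hdiag) * sigmaMax H * Ly)
    (hL : L = Lu + sigmaMax H ^ 2 * Ly)
    (ustar ystar : EuclideanSpace ℝ (Fin N))
    (hustar : ∀ u, Φ1 ustar + Φ2 (mulV H ustar + d) ≤ Φ1 u + Φ2 (mulV H u + d))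
    (hystar : ystar = mulV H ustar + d) :
    ∀ η : ℝ, 0 < η → ∀ u : EuclideanSpace ℝ (Fin N),
      0 ≤ 1 - 2 * m * η + L ^ 2 * η ^ 2 ∧
        ‖(u - η • F u) - ustar‖ ≤
          (Real.sqrt (1 - 2 * m * η + L ^ 2 * η ^ 2) + c * η) * ‖u - ustar‖ +
            η * ‖mulV (H.transpose - Hdiag) (gradient Φ2 ystar)‖ := by
  intro η hη u
  simp only [mulV] at hF hustar hystar ⊢
  set A := Matrix.toEuclideanCLM (𝕜 := ℝ) H
  set M := Matrix.toEuclideanCLM (𝕜 := ℝ) (H.transpose - Hdiag)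
  set G := addAdjointComp (gradient Φ1) (gradient Φ2) A d
  have hLy : 0 ≤ Ly := hmy.le.trans hmyLy
  have hGmono : ∀ a b, m * ‖a - b‖ ^ 2 ≤ ⟪G a - G b, a - b⟫ := hm ▸
    addAdjointComp_strongMono hΦ1mono hΦ2mono hmy.le H.sigmaMin_nonneg H.sigmaMin_mul_norm_le
  have hGlip : ∀ a b, ‖G a - G b‖ ≤ L * ‖a - b‖ := hL ▸ addAdjointComp_lipschitz hΦ1lip hΦ2lip hLy
  have hGstar : G ustar = 0 := IsLocalMin.hasGradientAt_eq_zero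
    (Filter.Eventually.of_forall hustar) (hasGradientAt_add_comp_affine A d (hΦ1diff _) (hΦ2diff _))
  have hmL : m ≤ L := by
    rw [hm, hL]
    gcongr
    · exact H.sigmaMin_nonneg
    · exact H.sigmaMin_le_sigmaMax
  have hFG : F u - G u = -M (gradient Φ2 (A u + d)) := by
    have hA : adjoint A = Matrix.toEuclideanCLM (𝕜 := ℝ) H.transpose :=
      Matrix.adjoint_toEuclideanCLM H
    simp only [hF, G, M, addAdjointComp, hA, map_sub, sub_apply]
    abel
  have hMnorm : ‖M‖ = sigmaMax (H - Hdiag) :=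
    H.sigmaMax_transpose_sub (by rw [hHdiag, Matrix.diagonal_transpose])
  have herr := norm_apply_comp_affine_le hΦ2lip hLy A M d u ustar
  refine ⟨one_sub_two_mul_add_sq_mul_sq_nonneg hmL hη.le,
    (norm_sub_smul_sub_le hGmono hGlip hGstar hη.le u).trans ?_⟩
  rw [hFG, norm_neg, hystar, hc, ← hMnorm, show sigmaMax H = ‖A‖ from rfl]
  linarith [mul_le_mul_of_nonneg_left herr hη.le]

/-- one-step bound for the decentralized update.
For every `η > 0` and every `u`, the update `u⁺ = u − η F(u)` satisfies
`‖u⁺ − u*‖ ≤ (√(1 − 2mη + L²η²) + cη)‖u − u*‖ + η‖(Hᵀ − H_diag)∇Φ²(y*)‖`,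
and `1 − 2mη + L²η² ≥ 0` since `m ≤ L`. -/
theorem stmt5 {N : ℕ} (hN : 0 < N)
(H : Matrix (Fin N) (Fin N) ℝ) (d : EuclideanSpace ℝ (Fin N))
    (Φ1 Φ2 : EuclideanSpace ℝ (Fin N) → ℝ)
    (mu Lu my Ly : ℝ)
    (hmu : 0 < mu) (hmuLu : mu ≤ Lu) (hmy : 0 < my) (hmyLy : my ≤ Ly)
    (hΦ1diff : Differentiable ℝ Φ1) (hΦ2diff : Differentiable ℝ Φ2)
    (hΦ1mono : ∀ a b, mu * ‖a - b‖ ^ 2 ≤ ⟪gradient Φ1 a - gradient Φ1 b, a - b⟫)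
    (hΦ1lip : ∀ a b, ‖gradient Φ1 a - gradient Φ1 b‖ ≤ Lu * ‖a - b‖)
    (hΦ2mono : ∀ a b, my * ‖a - b‖ ^ 2 ≤ ⟪gradient Φ2 a - gradient Φ2 b, a - b⟫)
    (hΦ2lip : ∀ a b, ‖gradient Φ2 a - gradient Φ2 b‖ ≤ Ly * ‖a - b‖)
    (Hdiag : Matrix (Fin N) (Fin N) ℝ)
    (hHdiag : Hdiag = Matrix.diagonal (fun i => H i i))
    (F : EuclideanSpace ℝ (Fin N) → EuclideanSpace ℝ (Fin N))
    (hF : ∀ u, F u = gradient Φ1 u + mulV Hdiag (gradient Φ2 (mulV H u + d)))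
    (m c L : ℝ)
    (hm : m = mu + sigmaMin H ^ 2 * my)
    (hc : c = sigmaMax (H - Hdiag) * sigmaMax H * Ly)
    (hL : L = Lu + sigmaMax H ^ 2 * Ly)
    (ustar ystar : EuclideanSpace ℝ (Fin N))
    (hustar : ∀ u, Φ1 ustar + Φ2 (mulV H ustar + d) ≤ Φ1 u + Φ2 (mulV H u + d))
    (hystar : ystar = mulV H ustar + d) :
    ∀ η : ℝ, 0 < η → ∀ u : EuclideanSpace ℝ (Fin N),
      0 ≤ 1 - 2 * m * η + L ^ 2 * η ^ 2 ∧
        ‖(u - η • F u) - ustar‖ ≤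
          (Real.sqrt (1 - 2 * m * η + L ^ 2 * η ^ 2) + c * η) * ‖u - ustar‖ +
            η * ‖mulV (H.transpose - Hdiag) (gradient Φ2 ystar)‖ :=
  stmt5_general H d Φ1 Φ2 mu Lu my Ly hmuLu hmy hmyLy hΦ1diff hΦ2diff hΦ1mono hΦ1lip hΦ2mono hΦ2lip
    Hdiag hHdiag F hF m c L hm hc hL ustar ystar hustar hystar
end

section
/- Assume m > c, let u∞ be the unique point with F(u∞) = 0 and y∞ = Hu∞ + d. Let (ũ_k) be generated by the centralized update ũ_{k+1} = ũ_k − η ∇Φ̃(ũ_k) with any step size η > 0 and any ũ₀ ∈ ℝ^N. Then for every k ≥ 0, ‖ũ_k − u∞‖² ≤ ρ̃^k ‖ũ₀ − u∞‖² + (η + η²) ‖(Hᵀ − H_diag) ∇Φ²(y∞)‖² · Σ_{j=0}^{k−1} ρ̃^j, where ρ̃ = (1 − 2mη + L²η²)(1 + η) ≥ 0, m = m_u + σ_min(H)² m_y, and L = L_u + σ_max(H)² L_y. -/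
/-!
The centralized gradient map `∇Φ̃ = ∇Φ¹ + Hᵀ ∇Φ²(H · + d)` is `m`-strongly monotone and
`L`-Lipschitz, so one gradient step contracts the squared distance to any point `u'` by the
factor `1 − 2mη + L²η²`, up to the residual `∇Φ̃(u')`. At `u∞` this residual equals
`(Hᵀ − H_diag) ∇Φ²(y∞)` because `F(u∞) = 0`; Young's inequality splits it off at the price
of the factor `1 + η`, and unrolling the resulting linear recursion gives the bound.
-/

open RealInnerProductSpace

section GradientStep

variable {E : Type*} [NormedAddCommGroup E] [InnerProductSpace ℝ E]

lemma norm_sub_smul_sq_le_of_strongMono {m L η : ℝ} (hη : 0 ≤ η) {x g : E}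
    (hmono : m * ‖x‖ ^ 2 ≤ ⟪g, x⟫) (hlip : ‖g‖ ≤ L * ‖x‖) :
    ‖x - η • g‖ ^ 2 ≤ (1 - 2 * m * η + L ^ 2 * η ^ 2) * ‖x‖ ^ 2 := by
  have hgsq : ‖g‖ ^ 2 ≤ L ^ 2 * ‖x‖ ^ 2 := by
    rw [← mul_pow]; exact pow_le_pow_left₀ (norm_nonneg g) hlip 2
  rw [norm_sub_sq_real, real_inner_smul_right, norm_smul, Real.norm_eq_abs, abs_of_nonneg hη,
    real_inner_comm]
  nlinarith [mul_le_mul_of_nonneg_left hmono hη, mul_le_mul_of_nonneg_left hgsq (sq_nonneg η)]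

lemma norm_sub_smul_sq_le_young {η : ℝ} (hη : 0 ≤ η) (y e : E) :
    ‖y - η • e‖ ^ 2 ≤ (1 + η) * ‖y‖ ^ 2 + (η + η ^ 2) * ‖e‖ ^ 2 := by
  have hinner : -⟪y, e⟫ ≤ ‖y‖ * ‖e‖ := (neg_le_abs _).trans (abs_real_inner_le_norm y e)
  have hamgm : 2 * (‖y‖ * ‖e‖) ≤ ‖y‖ ^ 2 + ‖e‖ ^ 2 := by nlinarith [sq_nonneg (‖y‖ - ‖e‖)]
  rw [norm_sub_sq_real, real_inner_smul_right, norm_smul, Real.norm_eq_abs, abs_of_nonneg hη]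
  nlinarith [mul_le_mul_of_nonneg_left hinner hη, mul_le_mul_of_nonneg_left hamgm hη]

lemma le_of_strongMono_of_lipschitz [Nontrivial E] {G : E → E} {m L : ℝ}
    (hmono : ∀ a b, m * ‖a - b‖ ^ 2 ≤ ⟪G a - G b, a - b⟫)
    (hlip : ∀ a b, ‖G a - G b‖ ≤ L * ‖a - b‖) : m ≤ L := by
  obtain ⟨a, ha⟩ := exists_ne (0 : E)
  have hpos : 0 < ‖a - 0‖ ^ 2 := by rw [sub_zero]; positivity
  have hupper : ⟪G a - G 0, a - 0⟫ ≤ L * ‖a - 0‖ ^ 2 :=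
    calc ⟪G a - G 0, a - 0⟫ ≤ ‖G a - G 0‖ * ‖a - 0‖ := real_inner_le_norm _ _
      _ ≤ L * ‖a - 0‖ * ‖a - 0‖ := by gcongr; exact hlip a 0
      _ = L * ‖a - 0‖ ^ 2 := by ring
  exact le_of_mul_le_mul_right ((hmono a 0).trans hupper) hpos

lemma norm_gradStep_sub_sq_le {G : E → E} {m L η : ℝ} (hη : 0 ≤ η) {u u' : E}
    (hmono : m * ‖u - u'‖ ^ 2 ≤ ⟪G u - G u', u - u'⟫)
    (hlip : ‖G u - G u'‖ ≤ L * ‖u - u'‖) :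
    ‖u - η • G u - u'‖ ^ 2 ≤
      (1 - 2 * m * η + L ^ 2 * η ^ 2) * (1 + η) * ‖u - u'‖ ^ 2 + (η + η ^ 2) * ‖G u'‖ ^ 2 := by
  have hsplit : u - η • G u - u' = (u - u' - η • (G u - G u')) - η • G u' := by
    rw [smul_sub]; abel
  rw [hsplit]
  calc _ ≤ (1 + η) * ‖u - u' - η • (G u - G u')‖ ^ 2 + (η + η ^ 2) * ‖G u'‖ ^ 2 :=
        norm_sub_smul_sq_le_young hη _ _
    _ ≤ (1 + η) * ((1 - 2 * m * η + L ^ 2 * η ^ 2) * ‖u - u'‖ ^ 2) +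
          (η + η ^ 2) * ‖G u'‖ ^ 2 := by
        gcongr
        exact norm_sub_smul_sq_le_of_strongMono hη hmono hlip
    _ = _ := by ring

end GradientStep

lemma le_pow_mul_add_mul_geom_sum {a : ℕ → ℝ} {ρ b : ℝ} (hρ : 0 ≤ ρ)
    (h : ∀ k, a (k + 1) ≤ ρ * a k + b) (k : ℕ) :
    a k ≤ ρ ^ k * a 0 + b * ∑ j ∈ Finset.range k, ρ ^ j := by
  induction k with
  | zero => simp
  | succ k ih =>
    calc a (k + 1) ≤ ρ * (ρ ^ k * a 0 + b * ∑ j ∈ Finset.range k, ρ ^ j) + b :=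
          (h k).trans (by gcongr)
      _ = ρ ^ (k + 1) * a 0 + b * ∑ j ∈ Finset.range (k + 1), ρ ^ j := by
          rw [geom_sum_succ]; ring

section AdjointComposite

variable {E F : Type*} [NormedAddCommGroup E] [InnerProductSpace ℝ E] [CompleteSpace E]
  [NormedAddCommGroup F] [InnerProductSpace ℝ F] [CompleteSpace F]
  (g₁ : E → E) (g₂ : F → F) (A : E →L[ℝ] F) (d : F)

/-- The gradient of `u ↦ Φ¹ u + Φ² (A u + d)` in terms of `g₁ = ∇Φ¹` and `g₂ = ∇Φ²`. -/
noncomputable def adjointCompositeGrad (u : E) : E :=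
  g₁ u + ContinuousLinearMap.adjoint A (g₂ (A u + d))

lemma adjointCompositeGrad_sub (a b : E) :
    adjointCompositeGrad g₁ g₂ A d a - adjointCompositeGrad g₁ g₂ A d b =
      (g₁ a - g₁ b) + ContinuousLinearMap.adjoint A (g₂ (A a + d) - g₂ (A b + d)) := by
  simp only [adjointCompositeGrad, map_sub]; abel

variable {g₁ g₂ A}

lemma adjointCompositeGrad_strongMono {m₁ m₂ s : ℝ} (hm₂ : 0 ≤ m₂) (hs : 0 ≤ s)
    (hA : ∀ v, s * ‖v‖ ≤ ‖A v‖)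
    (h₁ : ∀ a b, m₁ * ‖a - b‖ ^ 2 ≤ ⟪g₁ a - g₁ b, a - b⟫)
    (h₂ : ∀ a b, m₂ * ‖a - b‖ ^ 2 ≤ ⟪g₂ a - g₂ b, a - b⟫) (a b : E) :
    (m₁ + s ^ 2 * m₂) * ‖a - b‖ ^ 2 ≤
      ⟪adjointCompositeGrad g₁ g₂ A d a - adjointCompositeGrad g₁ g₂ A d b, a - b⟫ := by
  have hA_sq : (s * ‖a - b‖) ^ 2 ≤ ‖A (a - b)‖ ^ 2 :=
    pow_le_pow_left₀ (by positivity) (hA (a - b)) 2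
  have h₂' := h₂ (A a + d) (A b + d)
  rw [add_sub_add_right_eq_sub, ← map_sub] at h₂'
  rw [adjointCompositeGrad_sub, inner_add_left, ContinuousLinearMap.adjoint_inner_left]
  nlinarith [h₁ a b, mul_le_mul_of_nonneg_left hA_sq hm₂]

lemma adjointCompositeGrad_lipschitz {L₁ L₂ : ℝ} (hL₂ : 0 ≤ L₂)
    (h₁ : ∀ a b, ‖g₁ a - g₁ b‖ ≤ L₁ * ‖a - b‖)
    (h₂ : ∀ a b, ‖g₂ a - g₂ b‖ ≤ L₂ * ‖a - b‖) (a b : E) :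
    ‖adjointCompositeGrad g₁ g₂ A d a - adjointCompositeGrad g₁ g₂ A d b‖ ≤
      (L₁ + ‖A‖ ^ 2 * L₂) * ‖a - b‖ := by
  have h₂' := h₂ (A a + d) (A b + d)
  rw [add_sub_add_right_eq_sub, ← map_sub] at h₂'
  rw [adjointCompositeGrad_sub]
  calc _ ≤ ‖g₁ a - g₁ b‖ + ‖A‖ * ‖g₂ (A a + d) - g₂ (A b + d)‖ := by
        grw [norm_add_le, ContinuousLinearMap.le_opNorm, ContinuousLinearMap.adjoint.norm_map]
    _ ≤ L₁ * ‖a - b‖ + ‖A‖ * (L₂ * (‖A‖ * ‖a - b‖)) := by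
        grw [h₁ a b, h₂', ContinuousLinearMap.le_opNorm]
    _ = (L₁ + ‖A‖ ^ 2 * L₂) * ‖a - b‖ := by ring

end AdjointComposite

section Matrix

variable {N : ℕ} (H : Matrix (Fin N) (Fin N) ℝ)

lemma mulV_transpose (v : EuclideanSpace ℝ (Fin N)) :
    mulV H.transpose v = ContinuousLinearMap.adjoint (Matrix.toEuclideanCLM (𝕜 := ℝ) H) v := by
  rw [mulV, ← ContinuousLinearMap.star_eq_adjoint, ← map_star, Matrix.star_eq_conjTranspose,
    Matrix.conjTranspose_eq_transpose_of_trivial]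

lemma mulV_sub (H' : Matrix (Fin N) (Fin N) ℝ) (v : EuclideanSpace ℝ (Fin N)) :
    mulV (H - H') v = mulV H v - mulV H' v := by
  simp only [mulV, map_sub, sub_apply]

lemma sigmaMin_nonneg_s9 : 0 ≤ sigmaMin H :=
  Real.sInf_nonneg (by rintro _ ⟨v, -, rfl⟩; positivity)

lemma sigmaMin_mul_norm_le (v : EuclideanSpace ℝ (Fin N)) :
    sigmaMin H * ‖v‖ ≤ ‖Matrix.toEuclideanCLM (𝕜 := ℝ) H v‖ := by
  rcases eq_or_ne v 0 with rfl | hv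
  · simp
  have hv' : 0 < ‖v‖ := norm_pos_iff.mpr hv
  have hunit : ‖‖v‖⁻¹ • v‖ = 1 := by rw [norm_smul, norm_inv, norm_norm, inv_mul_cancel₀ hv'.ne']
  have hle : sigmaMin H ≤ ‖Matrix.toEuclideanCLM (𝕜 := ℝ) H (‖v‖⁻¹ • v)‖ :=
    csInf_le ⟨0, by rintro _ ⟨w, -, rfl⟩; positivity⟩ ⟨_, hunit, rfl⟩
  rw [map_smul, norm_smul, norm_inv, norm_norm, inv_mul_eq_div, le_div_iff₀ hv'] at hle
  exact hle

end Matrix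

theorem stmt9_general {N : ℕ} (hN : 0 < N)
(H : Matrix (Fin N) (Fin N) ℝ) (d : EuclideanSpace ℝ (Fin N))
    (Φ1 Φ2 : EuclideanSpace ℝ (Fin N) → ℝ)
    (mu Lu my Ly : ℝ)
    (hmy : 0 < my) (hmyLy : my ≤ Ly)
    (hΦ1mono : ∀ a b, mu * ‖a - b‖ ^ 2 ≤ ⟪gradient Φ1 a - gradient Φ1 b, a - b⟫)
    (hΦ1lip : ∀ a b, ‖gradient Φ1 a - gradient Φ1 b‖ ≤ Lu * ‖a - b‖)
    (hΦ2mono : ∀ a b, my * ‖a - b‖ ^ 2 ≤ ⟪gradient Φ2 a - gradient Φ2 b, a - b⟫)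
    (hΦ2lip : ∀ a b, ‖gradient Φ2 a - gradient Φ2 b‖ ≤ Ly * ‖a - b‖)
    (Hdiag : Matrix (Fin N) (Fin N) ℝ)
    (F : EuclideanSpace ℝ (Fin N) → EuclideanSpace ℝ (Fin N))
    (hF : ∀ u, F u = gradient Φ1 u + mulV Hdiag (gradient Φ2 (mulV H u + d)))
    (m L : ℝ)
    (hm : m = mu + sigmaMin H ^ 2 * my)
    (hL : L = Lu + sigmaMax H ^ 2 * Ly)
    (uinf yinf : EuclideanSpace ℝ (Fin N))
    (huinf : F uinf = 0)
    (hyinf : yinf = mulV H uinf + d)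
    (η : ℝ) (hη : 0 < η)
    (ut : ℕ → EuclideanSpace ℝ (Fin N))
    (hiter : ∀ k, ut (k + 1) =
      ut k - η • (gradient Φ1 (ut k) + mulV H.transpose (gradient Φ2 (mulV H (ut k) + d)))) :
    0 ≤ (1 - 2 * m * η + L ^ 2 * η ^ 2) * (1 + η) ∧
      ∀ k : ℕ,
        ‖ut k - uinf‖ ^ 2 ≤
          ((1 - 2 * m * η + L ^ 2 * η ^ 2) * (1 + η)) ^ k * ‖ut 0 - uinf‖ ^ 2 +
            (η + η ^ 2) * ‖mulV (H.transpose - Hdiag) (gradient Φ2 yinf)‖ ^ 2 *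
              ∑ j ∈ Finset.range k, ((1 - 2 * m * η + L ^ 2 * η ^ 2) * (1 + η)) ^ j := by
  set A := Matrix.toEuclideanCLM (𝕜 := ℝ) H
  set G := adjointCompositeGrad (gradient Φ1) (gradient Φ2) A d
  have hG : ∀ u, gradient Φ1 u + mulV H.transpose (gradient Φ2 (mulV H u + d)) = G u :=
    fun u => by rw [mulV_transpose]; rfl
  have hGmono : ∀ a b, m * ‖a - b‖ ^ 2 ≤ ⟪G a - G b, a - b⟫ := hm ▸
    adjointCompositeGrad_strongMono d hmy.le (sigmaMin_nonneg_s9 H) (sigmaMin_mul_norm_le H)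
      hΦ1mono hΦ2mono
  have hGlip : ∀ a b, ‖G a - G b‖ ≤ L * ‖a - b‖ := hL ▸
    adjointCompositeGrad_lipschitz d (hmy.trans_le hmyLy).le hΦ1lip hΦ2lip
  have : Nonempty (Fin N) := ⟨⟨0, hN⟩⟩
  have hmL : m ≤ L := le_of_strongMono_of_lipschitz hGmono hGlip
  have hρ : 0 ≤ (1 - 2 * m * η + L ^ 2 * η ^ 2) * (1 + η) :=
    -- `1 - 2mη + L²η² = (1 - Lη)² + 2η(L - m)`
    mul_nonneg (by nlinarith [sq_nonneg (1 - L * η), mul_le_mul_of_nonneg_right hmL hη.le])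
      (by linarith)
  have hresidual : G uinf = mulV (H.transpose - Hdiag) (gradient Φ2 yinf) := by
    have hFzero := hF uinf ▸ huinf
    rw [← hG, hyinf, mulV_sub, eq_neg_of_add_eq_zero_left hFzero]
    abel
  refine ⟨hρ, le_pow_mul_add_mul_geom_sum (a := fun k => ‖ut k - uinf‖ ^ 2) hρ fun k => ?_⟩
  rw [hiter, hG, ← hresidual]
  exact norm_gradStep_sub_sq_le hη.le (hGmono _ _) (hGlip _ _)

/-- centralized gradient trajectory measured against the decentralized
stationary point. With `∇Φ̃(u) = ∇Φ¹(u) + Hᵀ∇Φ²(Hu + d)` and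
`ρ̃ = (1 − 2mη + L²η²)(1 + η) ≥ 0`, the iterates of `ũ_{k+1} = ũ_k − η∇Φ̃(ũ_k)` satisfy
`‖ũ_k − u∞‖² ≤ ρ̃^k‖ũ₀ − u∞‖² + (η + η²)‖(Hᵀ − H_diag)∇Φ²(y∞)‖² Σ_{j<k} ρ̃^j`. -/
theorem stmt9 {N : ℕ} (hN : 0 < N)
(H : Matrix (Fin N) (Fin N) ℝ) (d : EuclideanSpace ℝ (Fin N))
    (Φ1 Φ2 : EuclideanSpace ℝ (Fin N) → ℝ)
    (mu Lu my Ly : ℝ)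
    (hmu : 0 < mu) (hmuLu : mu ≤ Lu) (hmy : 0 < my) (hmyLy : my ≤ Ly)
    (hΦ1diff : Differentiable ℝ Φ1) (hΦ2diff : Differentiable ℝ Φ2)
    (hΦ1mono : ∀ a b, mu * ‖a - b‖ ^ 2 ≤ ⟪gradient Φ1 a - gradient Φ1 b, a - b⟫)
    (hΦ1lip : ∀ a b, ‖gradient Φ1 a - gradient Φ1 b‖ ≤ Lu * ‖a - b‖)
    (hΦ2mono : ∀ a b, my * ‖a - b‖ ^ 2 ≤ ⟪gradient Φ2 a - gradient Φ2 b, a - b⟫)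
    (hΦ2lip : ∀ a b, ‖gradient Φ2 a - gradient Φ2 b‖ ≤ Ly * ‖a - b‖)
    (Hdiag : Matrix (Fin N) (Fin N) ℝ)
    (hHdiag : Hdiag = Matrix.diagonal (fun i => H i i))
    (F : EuclideanSpace ℝ (Fin N) → EuclideanSpace ℝ (Fin N))
    (hF : ∀ u, F u = gradient Φ1 u + mulV Hdiag (gradient Φ2 (mulV H u + d)))
    (m c L : ℝ)
    (hm : m = mu + sigmaMin H ^ 2 * my)
    (hc : c = sigmaMax (H - Hdiag) * sigmaMax H * Ly)
    (hL : L = Lu + sigmaMax H ^ 2 * Ly)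
    (hmc : m > c)
    (uinf yinf : EuclideanSpace ℝ (Fin N))
    (huinf : F uinf = 0)
    (hyinf : yinf = mulV H uinf + d)
    (η : ℝ) (hη : 0 < η)
    (ut : ℕ → EuclideanSpace ℝ (Fin N))
    (hiter : ∀ k, ut (k + 1) =
      ut k - η • (gradient Φ1 (ut k) + mulV H.transpose (gradient Φ2 (mulV H (ut k) + d)))) :
    0 ≤ (1 - 2 * m * η + L ^ 2 * η ^ 2) * (1 + η) ∧
      ∀ k : ℕ,
        ‖ut k - uinf‖ ^ 2 ≤
          ((1 - 2 * m * η + L ^ 2 * η ^ 2) * (1 + η)) ^ k * ‖ut 0 - uinf‖ ^ 2 +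
            (η + η ^ 2) * ‖mulV (H.transpose - Hdiag) (gradient Φ2 yinf)‖ ^ 2 *
              ∑ j ∈ Finset.range k, ((1 - 2 * m * η + L ^ 2 * η ^ 2) * (1 + η)) ^ j :=
  stmt9_general hN H d Φ1 Φ2 mu Lu my Ly hmy hmyLy hΦ1mono hΦ1lip hΦ2mono hΦ2lip Hdiag F hF m L hm
    hL uinf yinf huinf hyinf η hη ut hiter
end
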